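/- In any homotopy BV-LZ algebra, the bracket satisfies the graded Jacobi identity: {{a₁,a₂},a₃} − {a₁,{a₂,a₃}} + (−1)^{(|a₁|−1)(|a₂|−1)}{a₂,{a₁,a₃}} = 0 for all homogeneous a₁, a₂, a₃. -/
import Mathlib


/-- The sign `(-1)^n` in the field `K`, for `n : ℤ`. -/
def sgn (K : Type*) [Field K] (n : ℤ) : K := (-1 : K) ^ n


lemma sgn_even {K : Type*} [Field K] {n : ℤ} (h : Even n) : sgn K n = 1 := by
  simpa [sgn] using h.neg_one_zpow

lemma sgn_odd {K : Type*} [Field K] {n : ℤ} (h : Odd n) : sgn K n = -1 := by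
  simpa [sgn] using h.neg_one_zpow

/-- The Lian–Zuckerman bracket `{a₁,a₂} := (−1)^{|a₁|}(bμ(a₁,a₂) − μ(ba₁,a₂) −
(−1)^{|a₁|}μ(a₁,ba₂))`, where `i = |a₁|` is the degree of the (homogeneous) first
argument. -/
def gbr {K : Type*} [Field K] {V : Type*} [AddCommGroup V] [Module K V]
    (b : V →ₗ[K] V) (mu : V →ₗ[K] V →ₗ[K] V) (i : ℤ) (x y : V) : V :=
  sgn K i • (b (mu x y) - mu (b x) y - sgn K i • mu x (b y))

/-- A homotopy BV-LZ algebra on a graded `K`-vector space `V`: a degree-1 differential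
`Q` with `Q² = 0`, a degree-(−1) operator `b` with `b² = 0`, a degree-0 product `μ`, a
degree-(−1) homotopy `m` for its commutativity, a degree-(−1) homotopy `ν` for its
associativity, such that `Q` is a derivation of `μ`, the bracket `{·,·}` (defined from
`b` and `μ`) is a derivation of `μ` (Leibniz rule), and `Q` is a derivation of `{·,·}`. -/
structure HomotopyBVLZ (K : Type*) [Field K] (V : Type*) [AddCommGroup V] [Module K V] where
  deg : ℤ → Submodule K V
  internal : DirectSum.IsInternal deg
  Q : V →ₗ[K] V
  b : V →ₗ[K] V
  mu : V →ₗ[K] V →ₗ[K] V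
  mm : V →ₗ[K] V →ₗ[K] V
  nu : V →ₗ[K] V →ₗ[K] V →ₗ[K] V
  Q_mem : ∀ i : ℤ, ∀ x ∈ deg i, Q x ∈ deg (i + 1)
  b_mem : ∀ i : ℤ, ∀ x ∈ deg i, b x ∈ deg (i - 1)
  mu_mem : ∀ i j : ℤ, ∀ x ∈ deg i, ∀ y ∈ deg j, mu x y ∈ deg (i + j)
  mm_mem : ∀ i j : ℤ, ∀ x ∈ deg i, ∀ y ∈ deg j, mm x y ∈ deg (i + j - 1)
  nu_mem : ∀ i j k : ℤ, ∀ x ∈ deg i, ∀ y ∈ deg j, ∀ z ∈ deg k,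
    nu x y z ∈ deg (i + j + k - 1)
  Q_sq : ∀ x, Q (Q x) = 0
  b_sq : ∀ x, b (b x) = 0
  Q_der_mu : ∀ i : ℤ, ∀ x ∈ deg i, ∀ y,
    Q (mu x y) = mu (Q x) y + sgn K i • mu x (Q y)
  mu_comm : ∀ i j : ℤ, ∀ x ∈ deg i, ∀ y ∈ deg j,
    mu x y - sgn K (i * j) • mu y x
      = Q (mm x y) + mm (Q x) y + sgn K i • mm x (Q y)
  mu_assoc : ∀ i j : ℤ, ∀ x ∈ deg i, ∀ y ∈ deg j, ∀ z,
    mu (mu x y) z - mu x (mu y z)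
      = Q (nu x y z) + nu (Q x) y z + sgn K i • nu x (Q y) z
        + sgn K (i + j) • nu x y (Q z)
  leibniz : ∀ i j : ℤ, ∀ x ∈ deg i, ∀ y ∈ deg j, ∀ z,
    gbr b mu i x (mu y z)
      = mu (gbr b mu i x y) z + sgn K ((i - 1) * j) • mu y (gbr b mu i x z)
  Q_der_br : ∀ i : ℤ, ∀ x ∈ deg i, ∀ y,
    Q (gbr b mu i x y) = gbr b mu (i + 1) (Q x) y + sgn K (i - 1) • gbr b mu i x (Q y)

/-- The bilinear operation `n := [b,m]`, i.e.
`n(a₁,a₂) = b m(a₁,a₂) + m(ba₁,a₂) + (−1)^{|a₁|} m(a₁,ba₂)` (with `i = |a₁|`). -/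
def nbm {K : Type*} [Field K] {V : Type*} [AddCommGroup V] [Module K V]
    (b : V →ₗ[K] V) (mm : V →ₗ[K] V →ₗ[K] V) (i : ℤ) (x y : V) : V :=
  b (mm x y) + mm (b x) y + sgn K i • mm x (b y)

/-- In any homotopy BV-LZ algebra the bracket satisfies the graded
Jacobi identity
`{{a₁,a₂},a₃} − {a₁,{a₂,a₃}} + (−1)^{(|a₁|−1)(|a₂|−1)}{a₂,{a₁,a₃}} = 0`. -/
theorem stmt_7 {K : Type*} [Field K] {V : Type*} [AddCommGroup V] [Module K V]
    (H : HomotopyBVLZ K V) :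
    ∀ i j k : ℤ, ∀ a1 ∈ H.deg i, ∀ a2 ∈ H.deg j, ∀ a3 ∈ H.deg k,
      gbr H.b H.mu (i + j - 1) (gbr H.b H.mu i a1 a2) a3
        - gbr H.b H.mu i a1 (gbr H.b H.mu j a2 a3)
        + sgn K ((i - 1) * (j - 1)) • gbr H.b H.mu j a2 (gbr H.b H.mu i a1 a3) = 0 := by
  intro i j k a1 h1 a2 h2 a3 _h3
  have hb1 : H.b a1 ∈ H.deg (i - 1) := H.b_mem i a1 h1
  have hb2 : H.b a2 ∈ H.deg (j - 1) := H.b_mem j a2 h2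
  have L1 := H.leibniz i j a1 h1 a2 h2 a3
  have L2 := H.leibniz i j a1 h1 a2 h2 (H.b a3)
  have L3 := H.leibniz i (j - 1) a1 h1 (H.b a2) hb2 a3
  have L4 := H.leibniz (i - 1) j (H.b a1) hb1 a2 h2 a3
  have L1b := congrArg (⇑H.b) L1
  clear L1
  rcases Int.even_or_odd i with hi | hi <;> rcases Int.even_or_odd j with hj | hj
  · -- case
    obtain ⟨p, hp⟩ := hi
    obtain ⟨q, hq⟩ := hj
    have ei : sgn K (i) = 1 := sgn_even ⟨p, by omega⟩
    have ej : sgn K (j) = 1 := sgn_even ⟨q, by omega⟩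
    have eim : sgn K (i - 1) = -1 := sgn_odd ⟨p - 1, by omega⟩
    have es : sgn K (i + j - 1) = -1 := sgn_odd ⟨p + q - 1, by omega⟩
    have ep11 : sgn K ((i - 1) * (j - 1)) = -1 := sgn_odd (Odd.mul ⟨p - 1, by omega⟩ ⟨q - 1, by omega⟩)
    have ep1j : sgn K ((i - 1) * j) = 1 := sgn_even (Even.mul_left ⟨q, by omega⟩ _)
    have ep2j : sgn K ((i - 1 - 1) * j) = 1 := sgn_even (Even.mul_right ⟨p - 1, by omega⟩ _)
    simp only [gbr, ei, ej, eim, es, ep11, ep1j, ep2j, one_smul, neg_smul, neg_neg,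
      map_add, map_sub, map_smul, map_neg, H.b_sq, map_zero, LinearMap.add_apply,
      LinearMap.sub_apply, LinearMap.smul_apply, LinearMap.neg_apply,
      LinearMap.zero_apply, smul_zero, sub_zero, zero_sub, add_zero, zero_add]
      at L1b L2 L3 L4 ⊢
    linear_combination (norm := module) L1b + L2 + L3 - L4
  · -- case
    obtain ⟨p, hp⟩ := hi
    obtain ⟨q, hq⟩ := hj
    have ei : sgn K (i) = 1 := sgn_even ⟨p, by omega⟩
    have ej : sgn K (j) = -1 := sgn_odd ⟨q, by omega⟩
    have eim : sgn K (i - 1) = -1 := sgn_odd ⟨p - 1, by omega⟩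
    have es : sgn K (i + j - 1) = 1 := sgn_even ⟨p + q, by omega⟩
    have ep11 : sgn K ((i - 1) * (j - 1)) = 1 := sgn_even (Even.mul_left ⟨q, by omega⟩ _)
    have ep1j : sgn K ((i - 1) * j) = -1 := sgn_odd (Odd.mul ⟨p - 1, by omega⟩ ⟨q, by omega⟩)
    have ep2j : sgn K ((i - 1 - 1) * j) = 1 := sgn_even (Even.mul_right ⟨p - 1, by omega⟩ _)
    simp only [gbr, ei, ej, eim, es, ep11, ep1j, ep2j, one_smul, neg_smul, neg_neg,
      map_add, map_sub, map_smul, map_neg, H.b_sq, map_zero, LinearMap.add_apply,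
      LinearMap.sub_apply, LinearMap.smul_apply, LinearMap.neg_apply,
      LinearMap.zero_apply, smul_zero, sub_zero, zero_sub, add_zero, zero_add]
      at L1b L2 L3 L4 ⊢
    linear_combination (norm := module) -L1b + L2 - L3 + L4
  · -- case
    obtain ⟨p, hp⟩ := hi
    obtain ⟨q, hq⟩ := hj
    have ei : sgn K (i) = -1 := sgn_odd ⟨p, by omega⟩
    have ej : sgn K (j) = 1 := sgn_even ⟨q, by omega⟩
    have eim : sgn K (i - 1) = 1 := sgn_even ⟨p, by omega⟩
    have es : sgn K (i + j - 1) = 1 := sgn_even ⟨p + q, by omega⟩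
    have ep11 : sgn K ((i - 1) * (j - 1)) = 1 := sgn_even (Even.mul_right ⟨p, by omega⟩ _)
    have ep1j : sgn K ((i - 1) * j) = 1 := sgn_even (Even.mul_right ⟨p, by omega⟩ _)
    have ep2j : sgn K ((i - 1 - 1) * j) = 1 := sgn_even (Even.mul_left ⟨q, by omega⟩ _)
    simp only [gbr, ei, ej, eim, es, ep11, ep1j, ep2j, one_smul, neg_smul, neg_neg,
      map_add, map_sub, map_smul, map_neg, H.b_sq, map_zero, LinearMap.add_apply,
      LinearMap.sub_apply, LinearMap.smul_apply, LinearMap.neg_apply,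
      LinearMap.zero_apply, smul_zero, sub_zero, zero_sub, add_zero, zero_add]
      at L1b L2 L3 L4 ⊢
    linear_combination (norm := module) -L1b + L2 + L3 + L4
  · -- case
    obtain ⟨p, hp⟩ := hi
    obtain ⟨q, hq⟩ := hj
    have ei : sgn K (i) = -1 := sgn_odd ⟨p, by omega⟩
    have ej : sgn K (j) = -1 := sgn_odd ⟨q, by omega⟩
    have eim : sgn K (i - 1) = 1 := sgn_even ⟨p, by omega⟩
    have es : sgn K (i + j - 1) = -1 := sgn_odd ⟨p + q, by omega⟩
    have ep11 : sgn K ((i - 1) * (j - 1)) = 1 := sgn_even (Even.mul_right ⟨p, by omega⟩ _)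
    have ep1j : sgn K ((i - 1) * j) = 1 := sgn_even (Even.mul_right ⟨p, by omega⟩ _)
    have ep2j : sgn K ((i - 1 - 1) * j) = -1 := sgn_odd (Odd.mul ⟨p - 1, by omega⟩ ⟨q, by omega⟩)
    simp only [gbr, ei, ej, eim, es, ep11, ep1j, ep2j, one_smul, neg_smul, neg_neg,
      map_add, map_sub, map_smul, map_neg, H.b_sq, map_zero, LinearMap.add_apply,
      LinearMap.sub_apply, LinearMap.smul_apply, LinearMap.neg_apply,
      LinearMap.zero_apply, smul_zero, sub_zero, zero_sub, add_zero, zero_add]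
      at L1b L2 L3 L4 ⊢
    linear_combination (norm := module) L1b + L2 - L3 - L4
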